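/- Let (G,B,m,w) be a connected weighted finite graph with boundary, |B| ≥ 2, such that σ₂ = w₀·V_B / ((V_B − m₀)² · d_B). Then |B| = 2 and m_x = m₀ for every x ∈ B (in particular both boundary vertices have the same vertex measure, equal to m₀). -/

import Mathlib

/-! For a test function `u` with weighted mean zero on `B`, the Bhatia–Davis inequality bounds
`⟨u,u⟩_B` by `V_B osc(u)² / 4`, and Cauchy–Schwarz along a shortest path between the boundary
points where `u` is extremal bounds its energy below by `w₀ osc(u)² / d_B`. Hence
`σ₂ ≥ 4 w₀ / (V_B d_B)`, so the hypothesis forces `V_B / (V_B - m₀)² ≥ 4 / V_B`, i.e.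
`V_B ≤ 2 m₀`; but `V_B ≥ |B| m₀ ≥ 2 m₀`. -/

open Finset

variable {V : Type*}

/-- The Dirichlet energy `⟨du,du⟩ = ∑_{{x,y}∈E} (u y - u x)^2 w_{xy}` of a function `u`,
where the edge weight `w` is symmetric and vanishes on non-adjacent pairs. -/
noncomputable def energy [Fintype V] (w : V → V → ℝ) (u : V → ℝ) : ℝ :=
  (1 / 2) * ∑ x, ∑ y, (u y - u x) ^ 2 * w x y

/-- The Dirichlet pairing `⟨du,dv⟩ = ∑_{{x,y}∈E} (u y - u x)(v y - v x) w_{xy}`. -/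
noncomputable def dirPairing [Fintype V] (w : V → V → ℝ) (u v : V → ℝ) : ℝ :=
  (1 / 2) * ∑ x, ∑ y, (u y - u x) * (v y - v x) * w x y

/-- The weighted graph Laplacian `Δu(x) = (1/m_x) ∑_y (u y - u x) w_{xy}`. -/
noncomputable def glap [Fintype V] (m : V → ℝ) (w : V → V → ℝ) (u : V → ℝ) (x : V) : ℝ :=
  (1 / m x) * ∑ y, (u y - u x) * w x y

/-- `d_B`, the maximal graph distance between two boundary vertices. -/
noncomputable def boundaryDiam (G : SimpleGraph V) (B : Finset V) : ℕ :=
  (B ×ˢ B).sup fun p => G.dist p.1 p.2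

/-- `w₀`, the minimal edge weight. -/
noncomputable def minEdgeWeight (G : SimpleGraph V) (w : V → V → ℝ) : ℝ :=
  sInf {r : ℝ | ∃ x y, G.Adj x y ∧ w x y = r}

/-- `m₀`, the minimal vertex measure on the boundary. -/
noncomputable def minBoundaryMeasure (B : Finset V) (m : V → ℝ) : ℝ :=
  sInf {r : ℝ | ∃ x ∈ B, m x = r}

/-- The second Steklov eigenvalue `σ₂`, via its variational characterization: the infimum of
the Rayleigh quotients `E(u)/⟨u,u⟩_B` over functions `u` on `V` whose boundary values are
nonzero and have weighted mean zero.  (Since the harmonic extension minimizes the Dirichlet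
energy among all extensions of given boundary data, this agrees with the second eigenvalue of
the Steklov operator.) -/
noncomputable def sigma2 [Fintype V] (B : Finset V) (m : V → ℝ) (w : V → V → ℝ) : ℝ :=
  sInf {r : ℝ | ∃ u : V → ℝ, (∃ x ∈ B, u x ≠ 0) ∧ (∑ x ∈ B, u x * m x = 0) ∧
    r = energy w u / ∑ x ∈ B, (u x) ^ 2 * m x}

namespace SimpleGraph.Walk

variable {G : SimpleGraph V} {a b : V}

theorem sum_darts_sub (u : V → ℝ) (p : G.Walk a b) :
    (p.darts.map fun d => u d.snd - u d.fst).sum = u b - u a := by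
  induction p with
  | nil => simp
  | cons h q ih => simp only [darts_cons, List.map_cons, List.sum_cons, ih]; ring

theorem IsTrail.sum_darts_add_swap_le [Fintype V] [DecidableEq V] {p : G.Walk a b}
    (hp : p.IsTrail) {g : V → V → ℝ} (hg : ∀ x y, 0 ≤ g x y) :
    ∑ d ∈ p.darts.toFinset, (g d.fst d.snd + g d.snd d.fst) ≤ ∑ x, ∑ y, g x y := by
  set D := p.darts.toFinset
  have hdisj : Disjoint D (D.image Dart.symm) := by
    refine Finset.disjoint_left.mpr fun d hd hd' => ?_
    obtain ⟨d', hd'D, rfl⟩ := mem_image.mp hd'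
    have hedge : d'.symm.edge = d'.edge := Dart.edge_symm d'
    have := List.inj_on_of_nodup_map hp.edges_nodup (List.mem_toFinset.mp hd)
      (List.mem_toFinset.mp hd'D) hedge
    exact d'.symm_ne this
  calc ∑ d ∈ D, (g d.fst d.snd + g d.snd d.fst)
      = ∑ d ∈ D ∪ D.image Dart.symm, g d.fst d.snd := by
        rw [sum_union hdisj, sum_image fun _ _ _ _ h => Dart.symm_involutive.injective h,
          sum_add_distrib]
        rfl
    _ = ∑ q ∈ (D ∪ D.image Dart.symm).image Dart.toProd, g q.1 q.2 :=
        (sum_image (f := fun q : V × V => g q.1 q.2)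
          fun _ _ _ _ h => Dart.toProd_injective h).symm
    _ ≤ ∑ q : V × V, g q.1 q.2 :=
        sum_le_sum_of_subset_of_nonneg (subset_univ _) fun q _ _ => hg q.1 q.2
    _ = ∑ x, ∑ y, g x y := Fintype.sum_prod_type _

end SimpleGraph.Walk

/-- The Bhatia–Davis inequality for a weighted family of mean zero. -/
theorem four_mul_sum_sq_mul_le_of_sum_mul_eq_zero {ι : Type*} (s : Finset ι) {u m : ι → ℝ}
    {a b : ℝ} (hm : ∀ i ∈ s, 0 ≤ m i) (hu : ∀ i ∈ s, a ≤ u i ∧ u i ≤ b)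
    (hmean : ∑ i ∈ s, u i * m i = 0) :
    4 * ∑ i ∈ s, u i ^ 2 * m i ≤ (b - a) ^ 2 * ∑ i ∈ s, m i := by
  have h : ∑ i ∈ s, u i ^ 2 * m i ≤ ∑ i ∈ s, ((a + b) * (u i * m i) - a * b * m i) :=
    sum_le_sum fun i hi => by
      nlinarith [mul_nonneg (mul_nonneg (sub_nonneg.2 (hu i hi).1) (sub_nonneg.2 (hu i hi).2))
        (hm i hi)]
  rw [sum_sub_distrib, ← mul_sum, ← mul_sum, hmean] at h
  nlinarith [mul_nonneg (sq_nonneg (a + b)) (sum_nonneg hm)]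

section Energy

variable [Fintype V] {G : SimpleGraph V} {w : V → V → ℝ} {c : ℝ}

theorem energy_nonneg (hw : ∀ x y, 0 ≤ w x y) (u : V → ℝ) : 0 ≤ energy w u :=
  mul_nonneg (by norm_num) <| sum_nonneg fun x _ => sum_nonneg fun y _ =>
    mul_nonneg (sq_nonneg _) (hw x y)

theorem mul_sum_darts_sq_le_energy [DecidableEq V] (hw : ∀ x y, 0 ≤ w x y)
    (hcw : ∀ x y, G.Adj x y → c ≤ w x y) {a b : V} {p : G.Walk a b} (hp : p.IsTrail)
    (u : V → ℝ) :
    c * ∑ d ∈ p.darts.toFinset, (u d.snd - u d.fst) ^ 2 ≤ energy w u := by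
  have hpairs := hp.sum_darts_add_swap_le (g := fun x y => (u y - u x) ^ 2 * w x y)
    fun x y => mul_nonneg (sq_nonneg _) (hw x y)
  calc c * ∑ d ∈ p.darts.toFinset, (u d.snd - u d.fst) ^ 2
      = 1 / 2 * ∑ d ∈ p.darts.toFinset,
          ((u d.snd - u d.fst) ^ 2 * c + (u d.fst - u d.snd) ^ 2 * c) := by
        rw [mul_sum, mul_sum]
        exact sum_congr rfl fun _ _ => by ring
    _ ≤ 1 / 2 * ∑ d ∈ p.darts.toFinset,
          ((u d.snd - u d.fst) ^ 2 * w d.fst d.snd + (u d.fst - u d.snd) ^ 2 * w d.snd d.fst) := by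
        gcongr with d
        exacts [hcw _ _ d.adj, hcw _ _ d.adj.symm]
    _ ≤ energy w u := by
        rw [energy]
        gcongr

theorem mul_sq_sub_le_dist_mul_energy (hw : ∀ x y, 0 ≤ w x y) (hc : 0 ≤ c)
    (hcw : ∀ x y, G.Adj x y → c ≤ w x y) {a b : V} (hab : G.Reachable a b) (u : V → ℝ) :
    c * (u b - u a) ^ 2 ≤ G.dist a b * energy w u := by
  classical
  obtain ⟨p, hp, hlen⟩ := hab.exists_path_of_dist
  have hnodup : p.darts.Nodup := hp.isTrail.edges_nodup.of_map _
  have hsum : ∑ d ∈ p.darts.toFinset, (u d.snd - u d.fst) = u b - u a := by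
    rw [List.sum_toFinset _ hnodup, p.sum_darts_sub]
  have hcard : #p.darts.toFinset = G.dist a b := by
    rw [List.toFinset_card_of_nodup hnodup, SimpleGraph.Walk.length_darts, hlen]
  calc c * (u b - u a) ^ 2
      ≤ c * (G.dist a b * ∑ d ∈ p.darts.toFinset, (u d.snd - u d.fst) ^ 2) := by
        gcongr
        rw [← hsum, ← hcard]
        exact sq_sum_le_card_mul_sum_sq
    _ = G.dist a b * (c * ∑ d ∈ p.darts.toFinset, (u d.snd - u d.fst) ^ 2) := by ring
    _ ≤ G.dist a b * energy w u := by
        gcongr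
        exact mul_sum_darts_sq_le_energy hw hcw hp.isTrail u

end Energy

section BoundaryQuantities

variable {G : SimpleGraph V} {B : Finset V} {x y : V}

theorem dist_le_boundaryDiam (hx : x ∈ B) (hy : y ∈ B) : G.dist x y ≤ boundaryDiam G B :=
  le_sup (f := fun p : V × V => G.dist p.1 p.2) (b := (x, y)) (mem_product.mpr ⟨hx, hy⟩)

theorem boundaryDiam_pos (hG : G.Connected) (hx : x ∈ B) (hy : y ∈ B) (hxy : x ≠ y) :
    0 < boundaryDiam G B :=
  (hG.pos_dist_of_ne hxy).trans_le (dist_le_boundaryDiam hx hy)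

theorem minBoundaryMeasure_eq_inf' (m : V → ℝ) (hB : B.Nonempty) :
    minBoundaryMeasure B m = B.inf' hB m := by
  rw [inf'_eq_csInf_image, minBoundaryMeasure]
  rfl

theorem finite_edgeWeights [Finite V] (w : V → V → ℝ) :
    {r : ℝ | ∃ x y, G.Adj x y ∧ w x y = r}.Finite :=
  (Set.finite_range fun q : V × V => w q.1 q.2).subset <| by
    rintro _ ⟨x, y, -, rfl⟩
    exact ⟨(x, y), rfl⟩

theorem minEdgeWeight_le [Finite V] (w : V → V → ℝ) (h : G.Adj x y) :
    minEdgeWeight G w ≤ w x y :=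
  csInf_le (finite_edgeWeights w).bddBelow ⟨x, y, h, rfl⟩

theorem minEdgeWeight_pos [Finite V] {w : V → V → ℝ} (hw : ∀ x y, G.Adj x y → 0 < w x y)
    (h : G.Adj x y) : 0 < minEdgeWeight G w := by
  obtain ⟨a, b, hab, hmin⟩ : minEdgeWeight G w ∈ {r : ℝ | ∃ x y, G.Adj x y ∧ w x y = r} :=
    Set.Nonempty.csInf_mem ⟨w x y, x, y, h, rfl⟩ (finite_edgeWeights w)
  exact hmin ▸ hw a b hab

end BoundaryQuantities

section Steklov

variable [Fintype V] {G : SimpleGraph V} {B : Finset V} {m : V → ℝ} {w : V → V → ℝ} {c : ℝ}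

theorem four_mul_div_le_energy_div (hG : G.Connected) (hm : ∀ x ∈ B, 0 < m x)
    (hw : ∀ x y, 0 ≤ w x y) (hc : 0 ≤ c) (hcw : ∀ x y, G.Adj x y → c ≤ w x y)
    (hd : 0 < boundaryDiam G B) {u : V → ℝ} (hu : ∃ x ∈ B, u x ≠ 0)
    (hmean : ∑ x ∈ B, u x * m x = 0) :
    4 * c / ((∑ x ∈ B, m x) * boundaryDiam G B) ≤ energy w u / ∑ x ∈ B, u x ^ 2 * m x := by
  obtain ⟨x, hx, hux⟩ := hu
  obtain ⟨xmax, hxmax, hmax⟩ := B.exists_max_image u ⟨x, hx⟩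
  obtain ⟨xmin, hxmin, hmin⟩ := B.exists_min_image u ⟨x, hx⟩
  have hVB : 0 < ∑ x ∈ B, m x := sum_pos hm ⟨x, hx⟩
  have hden : 0 < ∑ x ∈ B, u x ^ 2 * m x :=
    sum_pos' (fun y hy => mul_nonneg (sq_nonneg _) (hm y hy).le)
      ⟨x, hx, mul_pos (sq_pos_of_ne_zero hux) (hm x hx)⟩
  have hvar := four_mul_sum_sq_mul_le_of_sum_mul_eq_zero B (fun y hy => (hm y hy).le)
    (fun y hy => ⟨hmin y hy, hmax y hy⟩) hmean
  have hosc : c * (u xmax - u xmin) ^ 2 ≤ boundaryDiam G B * energy w u :=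
    (mul_sq_sub_le_dist_mul_energy hw hc hcw (hG.preconnected xmin xmax) u).trans <| by
      gcongr
      · exact energy_nonneg hw u
      · exact_mod_cast dist_le_boundaryDiam hxmin hxmax
  rw [div_le_div_iff₀ (by positivity) hden]
  nlinarith [mul_le_mul_of_nonneg_left hvar hc, mul_le_mul_of_nonneg_left hosc hVB.le]

theorem four_mul_div_le_sigma2 (hG : G.Connected) (hm : ∀ x ∈ B, 0 < m x)
    (hw : ∀ x y, 0 ≤ w x y) (hc : 0 ≤ c) (hcw : ∀ x y, G.Adj x y → c ≤ w x y) {x y : V}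
    (hx : x ∈ B) (hy : y ∈ B) (hxy : x ≠ y) :
    4 * c / ((∑ x ∈ B, m x) * boundaryDiam G B) ≤ sigma2 B m w := by
  classical
  refine le_csInf ⟨_, Pi.single x (m y) - Pi.single y (m x), ⟨x, hx, ?_⟩, ?_, rfl⟩ ?_
  · simp [hxy, (hm y hy).ne']
  · simp only [Pi.sub_apply, sub_mul, sum_sub_distrib, Pi.single_apply, ite_mul, zero_mul,
      sum_ite_eq', if_pos hx, if_pos hy]
    ring
  · rintro _ ⟨u, hu, hmean, rfl⟩
    exact four_mul_div_le_energy_div hG hm hw hc hcw (boundaryDiam_pos hG hx hy hxy) hu hmean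

end Steklov

theorem mul_div_sub_sq_mul_lt_four_mul_div {a v μ d : ℝ} (ha : 0 < a) (hd : 0 < d) (hμ : 0 < μ)
    (h : 2 * μ < v) : a * v / ((v - μ) ^ 2 * d) < 4 * a / (v * d) := by
  have hvμ : 0 < v - μ := by linarith
  rw [div_lt_div_iff₀ (by positivity) (by nlinarith)]
  nlinarith [mul_pos (mul_pos ha hd) (mul_pos (by linarith : 0 < 2 * (v - μ) - v)
    (by linarith : 0 < 2 * (v - μ) + v))]

theorem card_eq_two_and_forall_eq_of_sum_le {ι : Type*} {s : Finset ι} {f : ι → ℝ} {μ : ℝ}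
    (hs : 2 ≤ #s) (hμ : 0 < μ) (hf : ∀ i ∈ s, μ ≤ f i) (hsum : ∑ i ∈ s, f i ≤ 2 * μ) :
    #s = 2 ∧ ∀ i ∈ s, f i = μ := by
  have hcard : #s * μ ≤ ∑ i ∈ s, f i := by simpa using card_nsmul_le_sum s f μ hf
  have hs2 : #s = 2 := by
    have : (#s : ℝ) ≤ 2 := le_of_mul_le_mul_right (hcard.trans hsum) hμ
    exact_mod_cast le_antisymm (by exact_mod_cast this) hs
  refine ⟨hs2, fun i hi => ?_⟩
  have hexcess : ∑ j ∈ s, (f j - μ) = 0 := by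
    refine le_antisymm ?_ (sum_nonneg fun j hj => sub_nonneg.2 (hf j hj))
    rw [sum_sub_distrib, sum_const, hs2]
    simp only [nsmul_eq_mul, Nat.cast_ofNat]
    linarith
  linarith [(sum_eq_zero_iff_of_nonneg fun j hj => sub_nonneg.2 (hf j hj)).1 hexcess i hi]

theorem extended_perrin_rigidity_boundary_general [Fintype V]
    (G : SimpleGraph V) (hG : G.Connected)
    (B : Finset V) (hB : 2 ≤ B.card)
    (m : V → ℝ) (w : V → V → ℝ)
    (hm : ∀ x, 0 < m x)
    (hw_pos : ∀ x y, G.Adj x y → 0 < w x y)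
    (hw_zero : ∀ x y, ¬ G.Adj x y → w x y = 0)
    (heq : sigma2 B m w =
      minEdgeWeight G w * (∑ x ∈ B, m x) /
        (((∑ x ∈ B, m x) - minBoundaryMeasure B m) ^ 2 * (boundaryDiam G B : ℝ))) :
    B.card = 2 ∧ ∀ x ∈ B, m x = minBoundaryMeasure B m := by
  classical
  obtain ⟨x, hx, y, hy, hxy⟩ := one_lt_card.mp hB
  have : Nontrivial V := ⟨⟨x, y, hxy⟩⟩
  obtain ⟨z, hxz⟩ := hG.preconnected.exists_adj_of_nontrivial x
  have hw : ∀ x y, 0 ≤ w x y := fun x y => by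
    by_cases h : G.Adj x y
    exacts [(hw_pos x y h).le, (hw_zero x y h).ge]
  have hw₀ : 0 < minEdgeWeight G w := minEdgeWeight_pos hw_pos hxz
  have hm₀ : 0 < minBoundaryMeasure B m := by
    rw [minBoundaryMeasure_eq_inf' m ⟨x, hx⟩]
    exact (lt_inf'_iff _).2 fun x _ => hm x
  have hσ := four_mul_div_le_sigma2 hG (fun x _ => hm x) hw hw₀.le
    (fun _ _ => minEdgeWeight_le w) hx hy hxy
  have hVB : ∑ x ∈ B, m x ≤ 2 * minBoundaryMeasure B m := by
    by_contra! h
    rw [heq] at hσ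
    exact hσ.not_gt (mul_div_sub_sq_mul_lt_four_mul_div hw₀
      (by exact_mod_cast boundaryDiam_pos hG hx hy hxy) hm₀ h)
  refine card_eq_two_and_forall_eq_of_sum_le hB hm₀ (fun x hx => ?_) hVB
  rw [minBoundaryMeasure_eq_inf' m ⟨x, hx⟩]
  exact inf'_le m hx

/-- **Rigidity, part (1)** (Theorem 1.4 (1)).
If a connected weighted finite graph with boundary `B`, `|B| ≥ 2`, satisfies
`σ₂ = w₀ V_B / ((V_B - m₀)² d_B)`, then `|B| = 2` and `m_x = m₀` for every `x ∈ B`. -/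
theorem extended_perrin_rigidity_boundary [Fintype V]
    (G : SimpleGraph V) (hG : G.Connected)
    (B : Finset V) (hB : 2 ≤ B.card)
    (m : V → ℝ) (w : V → V → ℝ)
    (hm : ∀ x, 0 < m x)
    (hw_symm : ∀ x y, w x y = w y x)
    (hw_pos : ∀ x y, G.Adj x y → 0 < w x y)
    (hw_zero : ∀ x y, ¬ G.Adj x y → w x y = 0)
    (heq : sigma2 B m w =
      minEdgeWeight G w * (∑ x ∈ B, m x) /
        (((∑ x ∈ B, m x) - minBoundaryMeasure B m) ^ 2 * (boundaryDiam G B : ℝ))) :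
    B.card = 2 ∧ ∀ x ∈ B, m x = minBoundaryMeasure B m :=
  extended_perrin_rigidity_boundary_general G hG B hB m w hm hw_pos hw_zero heq
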